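/- Let n = 4k with k ≥ 1 and let σ be a generalized vector cross product on ℝⁿ. Then for every nonzero vector X ∈ ℝⁿ and every nonzero vector U ∈ ker(σ_X), one has ker(σ_U) = ker(σ_X). -/

import Mathlib

open scoped RealInnerProductSpace

noncomputable section

/-- Euclidean space `ℝⁿ`. -/
abbrev Euc (n : ℕ) : Type := EuclideanSpace ℝ (Fin n)

/-- The skew-symmetric endomorphism `τ_X` of `ℝⁿ` associated to a 3-form `τ` and a vector `X`,
characterized by `⟪τ_X Y, Z⟫ = τ (X, Y, Z)`. -/
noncomputable def contr3 {n : ℕ} (τ : AlternatingMap ℝ (Euc n) ℝ (Fin 3)) (X : Euc n) :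
    Euc n →ₗ[ℝ] Euc n where
  toFun Y := ∑ i : Fin n,
    ((τ.curryLeft X).curryLeft Y ![EuclideanSpace.single i 1]) • EuclideanSpace.single i (1 : ℝ)
  map_add' Y₁ Y₂ := by
    simp [map_add, add_smul, Finset.sum_add_distrib]
  map_smul' c Y := by
    simp [map_smul, smul_smul, Finset.smul_sum]

/-- `τ` is a vector cross product: `‖τ_X Y‖² = ‖X‖²‖Y‖² − ⟪X,Y⟫²`. -/
def IsVCP {n : ℕ} (τ : AlternatingMap ℝ (Euc n) ℝ (Fin 3)) : Prop :=
  ∀ X Y : Euc n, ‖contr3 τ X Y‖ ^ 2 = ‖X‖ ^ 2 * ‖Y‖ ^ 2 - ⟪X, Y⟫ ^ 2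

/-- `σ` is a generalized vector cross product: there is a nonzero skew-symmetric endomorphism `A`
such that for every unit vector `X`, `σ_X` is orthogonally conjugate to `A`. -/
def IsGVCP {n : ℕ} (σ : AlternatingMap ℝ (Euc n) ℝ (Fin 3)) : Prop :=
  ∃ A : Euc n →ₗ[ℝ] Euc n, A ≠ 0 ∧ (∀ X Y : Euc n, ⟪A X, Y⟫ = -⟪X, A Y⟫) ∧
    ∀ X : Euc n, ‖X‖ = 1 → ∃ u : Euc n ≃ₗᵢ[ℝ] Euc n,
      ∀ Y : Euc n, contr3 σ X Y = u (A (u.symm Y))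

/-- The endomorphism `U ⊗ V : X ↦ ⟪X, V⟫ U`. -/
noncomputable def tens {n : ℕ} (U V : Euc n) : Euc n →ₗ[ℝ] Euc n where
  toFun X := ⟪X, V⟫ • U
  map_add' X₁ X₂ := by (try dsimp only); rw [inner_add_left, add_smul]
  map_smul' c X := by simp only [RingHom.id_apply]; rw [real_inner_smul_left, mul_smul]

/-- The `i`-th coordinate, as a linear functional on `ℝⁿ`. -/
noncomputable def coordL {n : ℕ} (i : Fin n) : Euc n →ₗ[ℝ] ℝ where
  toFun x := x i
  map_add' _ _ := rfl
  map_smul' _ _ := rfl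

/-- The elementary 3-form `eᵢ ∧ eⱼ ∧ e_k` on `ℝⁿ`. -/
noncomputable def elem3 {n : ℕ} (i j k : Fin n) : AlternatingMap ℝ (Euc n) ℝ (Fin 3) :=
  (Matrix.detRowAlternating : AlternatingMap ℝ (Fin 3 → ℝ) ℝ (Fin 3)).compLinearMap
    (LinearMap.pi (fun s : Fin 3 => coordL (![i, j, k] s)))

/-- The action of an orthogonal transformation `α` on 3-forms:
`(α · τ)(X,Y,Z) = τ(α⁻¹X, α⁻¹Y, α⁻¹Z)`. -/
noncomputable def oAct {n : ℕ} (α : Euc n ≃ₗᵢ[ℝ] Euc n)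
    (τ : AlternatingMap ℝ (Euc n) ℝ (Fin 3)) : AlternatingMap ℝ (Euc n) ℝ (Fin 3) :=
  τ.compLinearMap α.symm.toLinearEquiv.toLinearMap

/-- The volume form `e₁ ∧ e₂ ∧ e₃` (in any `ℝⁿ` with `n ≥ 3`). -/
noncomputable def vol3Gen {n : ℕ} (h : 3 ≤ n) : AlternatingMap ℝ (Euc n) ℝ (Fin 3) :=
  elem3 ⟨0, by omega⟩ ⟨1, by omega⟩ ⟨2, by omega⟩

/-- The fundamental `G₂` 3-form
`τ₀ = e₁∧e₂∧e₇ + e₃∧e₄∧e₇ + e₅∧e₆∧e₇ + e₁∧e₃∧e₅ − e₁∧e₄∧e₆ − e₂∧e₃∧e₆ − e₂∧e₄∧e₅`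
(with 1-indexed basis vectors, stated in any `ℝⁿ` with `n ≥ 7`). -/
noncomputable def tau0Gen {n : ℕ} (h : 7 ≤ n) : AlternatingMap ℝ (Euc n) ℝ (Fin 3) :=
  elem3 ⟨0, by omega⟩ ⟨1, by omega⟩ ⟨6, by omega⟩
  + elem3 ⟨2, by omega⟩ ⟨3, by omega⟩ ⟨6, by omega⟩
  + elem3 ⟨4, by omega⟩ ⟨5, by omega⟩ ⟨6, by omega⟩
  + elem3 ⟨0, by omega⟩ ⟨2, by omega⟩ ⟨4, by omega⟩
  - elem3 ⟨0, by omega⟩ ⟨3, by omega⟩ ⟨5, by omega⟩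
  - elem3 ⟨1, by omega⟩ ⟨2, by omega⟩ ⟨5, by omega⟩
  - elem3 ⟨1, by omega⟩ ⟨3, by omega⟩ ⟨4, by omega⟩

/-- The `SU(3)` 3-form `σ₀ = e₁∧e₃∧e₅ − e₁∧e₄∧e₆ − e₂∧e₃∧e₆ − e₂∧e₄∧e₅`
(with 1-indexed basis vectors, stated in any `ℝⁿ` with `n ≥ 6`). -/
noncomputable def sigma0Gen {n : ℕ} (h : 6 ≤ n) : AlternatingMap ℝ (Euc n) ℝ (Fin 3) :=
  elem3 ⟨0, by omega⟩ ⟨2, by omega⟩ ⟨4, by omega⟩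
  - elem3 ⟨0, by omega⟩ ⟨3, by omega⟩ ⟨5, by omega⟩
  - elem3 ⟨1, by omega⟩ ⟨2, by omega⟩ ⟨5, by omega⟩
  - elem3 ⟨1, by omega⟩ ⟨3, by omega⟩ ⟨4, by omega⟩

end

/-!
For `X ≠ 0` the map `σ_X` is, up to the factor `‖X‖`, orthogonally conjugate to the fixed map
`A`, so all kernels `ker σ_X` have the same dimension. Hence `B = σ_X` and `C = σ_Z` satisfy
`dim ker (B + x C) = dim ker B` for all small `x > 0`. For skew `B` this forces
`⟪C w, w'⟫ = 0` for `w, w' ∈ ker B`: the orthogonal projection `ker (B + x C) → ker B` is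
injective for small `x`, hence onto, so every `w ∈ ker B` is `O(x)`-close to some
`v ∈ ker (B + x C)`, and `⟪C v, w'⟫ = -x⁻¹ ⟪B v, w'⟫ = 0`.
Thus `σ(Z, w, w') = 0` for all `Z` and `w, w' ∈ ker σ_X`. For `U ∈ ker σ_X` this gives
`σ(U, w, Z) = σ(Z, U, w) = 0`, i.e. `ker σ_X ⊆ ker σ_U`, and equal dimensions give equality.
-/

open Filter (Tendsto)
open LinearMap (ker)
open Module (finrank)
open Topology

lemma AlternatingMap.map_vecCons_rotate {R M N : Type*} [CommRing R] [AddCommMonoid M]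
    [Module R M] [AddCommGroup N] [Module R N] (f : M [⋀^Fin 3]→ₗ[R] N) (a b c : M) :
    f ![b, c, a] = f ![a, b, c] := by
  have hrot : ![b, c, a] = ![a, b, c] ∘ finRotate 3 := by
    funext i; fin_cases i <;> rfl
  rw [hrot, f.map_perm, sign_finRotate]
  simp

lemma AlternatingMap.map_vecCons_swap {R M N : Type*} [CommRing R] [AddCommMonoid M]
    [Module R M] [AddCommGroup N] [Module R N] (f : M [⋀^Fin 3]→ₗ[R] N) (a b c : M) :
    f ![a, c, b] = -f ![a, b, c] := by
  have hswap : ![a, c, b] = ![a, b, c] ∘ Equiv.swap 1 2 := by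
    funext i; fin_cases i <;> rfl
  rw [hswap, f.map_swap _ (by decide)]

lemma eq_zero_of_eventually_abs_le_mul {q M : ℝ} (h : ∀ᶠ x in 𝓝[>] 0, |q| ≤ M * x) :
    q = 0 := by
  have hlim : Tendsto (fun x => M * x) (𝓝[>] 0) (𝓝 0) := by
    simpa using ((continuous_const_mul M).tendsto 0).mono_left nhdsWithin_le_nhds
  exact abs_nonpos_iff.mp (ge_of_tendsto hlim h)

section SkewPerturbation

variable {E : Type*} [NormedAddCommGroup E] [InnerProductSpace ℝ E]
  {B C : E →ₗ[ℝ] E} {c K x : ℝ}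

lemma inner_apply_eq_zero_of_mem_ker_add_smul (hB : ∀ v w, ⟪B v, w⟫ = -⟪v, B w⟫)
    (hx : x ≠ 0) {v w : E} (hv : v ∈ ker (B + x • C)) (hw : w ∈ ker B) : ⟪C v, w⟫ = 0 := by
  have hxCv : x * ⟪C v, w⟫ = 0 := calc
    x * ⟪C v, w⟫ = ⟪(B + x • C) v, w⟫ - ⟪B v, w⟫ := by
      simp [inner_add_left, real_inner_smul_left]
    _ = 0 := by rw [hv, hB, hw]; simp
  exact (mul_eq_zero.mp hxCv).resolve_left hx

variable [FiniteDimensional ℝ E]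

lemma LinearMap.exists_norm_le_mul_norm_apply_of_mem_orthogonal_ker {F : Type*}
    [NormedAddCommGroup F] [NormedSpace ℝ F] (f : E →ₗ[ℝ] F) :
    ∃ c : ℝ, 0 ≤ c ∧ ∀ v ∈ (ker f)ᗮ, ‖v‖ ≤ c * ‖f v‖ := by
  have hinj : ker (f ∘ₗ (ker f)ᗮ.subtype) = ⊥ := by
    rw [ker_eq_bot']
    rintro ⟨v, hv⟩ hfv
    simpa using (Submodule.inf_orthogonal_eq_bot (ker f)).le ⟨hfv, hv⟩
  obtain ⟨c, -, hc⟩ := (f ∘ₗ (ker f)ᗮ.subtype).exists_antilipschitzWith hinj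
  exact ⟨c, c.2, fun v hv => ZeroHomClass.bound_of_antilipschitz _ hc ⟨v, hv⟩⟩

lemma norm_sub_starProjection_ker_le (hc0 : 0 ≤ c)
    (hc : ∀ v ∈ (ker B)ᗮ, ‖v‖ ≤ c * ‖B v‖) (hK : ∀ v, ‖C v‖ ≤ K * ‖v‖) {v : E}
    (hv : v ∈ ker (B + x • C)) :
    ‖v - (ker B).starProjection v‖ ≤ |x| * c * K * ‖v‖ := by
  have hBv : B v = -(x • C v) := eq_neg_of_add_eq_zero_left hv
  have hBPv : B ((ker B).starProjection v) = 0 := (ker B).starProjection_apply_mem v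
  calc ‖v - (ker B).starProjection v‖
      ≤ c * ‖B (v - (ker B).starProjection v)‖ :=
        hc _ ((ker B).sub_starProjection_mem_orthogonal v)
    _ = c * (|x| * ‖C v‖) := by
      rw [map_sub, hBPv, sub_zero, hBv, norm_neg, norm_smul, Real.norm_eq_abs]
    _ ≤ c * (|x| * (K * ‖v‖)) := by gcongr; exact hK v
    _ = |x| * c * K * ‖v‖ := by ring

lemma exists_mem_ker_add_smul_starProjection_eq (hc0 : 0 ≤ c)
    (hc : ∀ v ∈ (ker B)ᗮ, ‖v‖ ≤ c * ‖B v‖) (hK : ∀ v, ‖C v‖ ≤ K * ‖v‖)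
    (hsmall : |x| * c * K < 1) (hdim : finrank ℝ (ker (B + x • C)) = finrank ℝ (ker B))
    {w : E} (hw : w ∈ ker B) : ∃ v ∈ ker (B + x • C), (ker B).starProjection v = w := by
  let φ : ker (B + x • C) →ₗ[ℝ] ker B :=
    ((ker B).orthogonalProjectionOnto : E →ₗ[ℝ] ker B) ∘ₗ (ker (B + x • C)).subtype
  have hφ : ∀ v, (φ v : E) = (ker B).starProjection v := fun v => rfl
  have hinj : Function.Injective φ := by
    rw [injective_iff_map_eq_zero]
    rintro ⟨v, hv⟩ hφv
    have hPv : (ker B).starProjection v = 0 := by rw [← hφ ⟨v, hv⟩, hφv]; rfl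
    have hle := norm_sub_starProjection_ker_le hc0 hc hK hv
    rw [hPv, sub_zero] at hle
    exact Subtype.ext (norm_eq_zero.mp (by nlinarith [norm_nonneg v]))
  obtain ⟨v, hv⟩ :=
    (LinearMap.injective_iff_surjective_of_finrank_eq_finrank hdim).mp hinj ⟨w, hw⟩
  exact ⟨v, v.2, by rw [← hφ, hv]⟩

lemma abs_inner_apply_le_of_finrank_ker_add_smul_eq (hB : ∀ v w, ⟪B v, w⟫ = -⟪v, B w⟫)
    (hc0 : 0 ≤ c) (hc : ∀ v ∈ (ker B)ᗮ, ‖v‖ ≤ c * ‖B v‖) (hK0 : 0 ≤ K)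
    (hK : ∀ v, ‖C v‖ ≤ K * ‖v‖) (hx : 0 < x) (hsmall : x * c * K ≤ 1 / 2)
    (hdim : finrank ℝ (ker (B + x • C)) = finrank ℝ (ker B)) {w w' : E} (hw : w ∈ ker B)
    (hw' : w' ∈ ker B) : |⟪C w, w'⟫| ≤ 2 * c * K ^ 2 * ‖w‖ * ‖w'‖ * x := by
  obtain ⟨v, hv, hPv⟩ := exists_mem_ker_add_smul_starProjection_eq hc0 hc hK
    (by rw [abs_of_pos hx]; linarith) hdim hw
  have hvw : ‖v - w‖ ≤ x * c * K * ‖v‖ := by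
    simpa [hPv, abs_of_pos hx] using norm_sub_starProjection_ker_le hc0 hc hK hv
  have hv2 : ‖v‖ ≤ 2 * ‖w‖ := by
    have := norm_le_norm_add_norm_sub' v w
    nlinarith [norm_nonneg v]
  have hCw : ⟪C w, w'⟫ = -⟪C (v - w), w'⟫ := by
    rw [map_sub, inner_sub_left, inner_apply_eq_zero_of_mem_ker_add_smul hB hx.ne' hv hw']
    ring
  calc |⟪C w, w'⟫| = |⟪C (v - w), w'⟫| := by rw [hCw, abs_neg]
    _ ≤ ‖C (v - w)‖ * ‖w'‖ := abs_real_inner_le_norm _ _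
    _ ≤ K * (x * c * K * (2 * ‖w‖)) * ‖w'‖ := by
      gcongr
      exact (hK _).trans (mul_le_mul_of_nonneg_left (hvw.trans (by gcongr)) hK0)
    _ = 2 * c * K ^ 2 * ‖w‖ * ‖w'‖ * x := by ring

theorem inner_apply_eq_zero_of_eventually_finrank_ker_add_smul_eq
    (hB : ∀ v w, ⟪B v, w⟫ = -⟪v, B w⟫)
    (hdim : ∀ᶠ x in 𝓝[>] (0 : ℝ), finrank ℝ (ker (B + x • C)) = finrank ℝ (ker B))
    {w w' : E} (hw : w ∈ ker B) (hw' : w' ∈ ker B) : ⟪C w, w'⟫ = 0 := by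
  obtain ⟨c, hc0, hc⟩ := B.exists_norm_le_mul_norm_apply_of_mem_orthogonal_ker
  set K := ‖C.toContinuousLinearMap‖
  have hsmall : ∀ᶠ x in 𝓝[>] (0 : ℝ), x * c * K ≤ 1 / 2 := by
    have hlim : Tendsto (fun x : ℝ => x * c * K) (𝓝 0) (𝓝 0) := by
      simpa using ((Filter.tendsto_id (x := 𝓝 (0 : ℝ))).mul_const c).mul_const K
    exact (hlim.eventually (ge_mem_nhds (by norm_num))).filter_mono nhdsWithin_le_nhds
  refine eq_zero_of_eventually_abs_le_mul (M := 2 * c * K ^ 2 * ‖w‖ * ‖w'‖) ?_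
  filter_upwards [hdim, hsmall, self_mem_nhdsWithin] with x hxdim hxs hx
  exact abs_inner_apply_le_of_finrank_ker_add_smul_eq hB hc0 hc (norm_nonneg _)
    C.toContinuousLinearMap.le_opNorm hx hxs hxdim hw hw'

end SkewPerturbation

section Contraction

variable {n : ℕ} (τ : AlternatingMap ℝ (Euc n) ℝ (Fin 3))

lemma inner_contr3 (X Y Z : Euc n) : ⟪contr3 τ X Y, Z⟫ = τ ![X, Y, Z] := by
  let L : Euc n →ₗ[ℝ] ℝ := τ.toMultilinearMap.toLinearMap ![X, Y, 0] 2
  have hL : ∀ W, L W = τ ![X, Y, W] := fun W => by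
    simp only [L, MultilinearMap.toLinearMap_apply, AlternatingMap.coe_multilinearMap]
    congr 1; funext i; fin_cases i <;> rfl
  calc ⟪contr3 τ X Y, Z⟫ = ∑ i, Z i * L (EuclideanSpace.single i 1) := by
        simp [contr3, sum_inner, inner_smul_left, EuclideanSpace.inner_single_left, hL, mul_comm]
    _ = L Z := by
        conv_rhs => rw [← (EuclideanSpace.basisFun (Fin n) ℝ).sum_repr Z]
        simp [map_sum]
    _ = τ ![X, Y, Z] := hL Z

lemma contr3_skew (X v w : Euc n) : ⟪contr3 τ X v, w⟫ = -⟪v, contr3 τ X w⟫ := by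
  rw [inner_contr3, real_inner_comm, inner_contr3, τ.map_vecCons_swap]

lemma contr3_add (X X' : Euc n) : contr3 τ (X + X') = contr3 τ X + contr3 τ X' := by
  ext Y : 1
  refine ext_inner_right ℝ fun Z => ?_
  simp only [LinearMap.add_apply, inner_add_left, inner_contr3]
  exact τ.map_vecCons_add _ X X'

lemma contr3_smul (a : ℝ) (X : Euc n) : contr3 τ (a • X) = a • contr3 τ X := by
  ext Y : 1
  refine ext_inner_right ℝ fun Z => ?_
  simp only [LinearMap.smul_apply, real_inner_smul_left, inner_contr3]
  exact τ.map_vecCons_smul _ a X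

lemma finrank_ker_contr3_of_conj {A : Euc n →ₗ[ℝ] Euc n}
    (hconj : ∀ X : Euc n, ‖X‖ = 1 → ∃ u : Euc n ≃ₗᵢ[ℝ] Euc n,
      ∀ Y : Euc n, contr3 τ X Y = u (A (u.symm Y)))
    {X : Euc n} (hX : X ≠ 0) :
    finrank ℝ (ker (contr3 τ X)) = finrank ℝ (ker A) := by
  obtain ⟨u, hu⟩ := hconj (‖X‖⁻¹ • X) (norm_smul_inv_norm hX)
  have hconjX : contr3 τ (‖X‖⁻¹ • X) =
      (u.toLinearEquiv : Euc n →ₗ[ℝ] Euc n) ∘ₗ A ∘ₗ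
        (u.symm.toLinearEquiv : Euc n →ₗ[ℝ] Euc n) :=
    LinearMap.ext hu
  have hkerX : ker (contr3 τ X) = (ker A).map (u.toLinearEquiv : Euc n →ₗ[ℝ] Euc n) := by
    rw [← LinearMap.ker_smul _ _ (inv_ne_zero (norm_ne_zero_iff.mpr hX)), ← contr3_smul, hconjX,
      LinearEquiv.ker_comp, LinearMap.ker_comp]
    exact Submodule.comap_equiv_eq_map_symm _ _
  rw [hkerX, LinearEquiv.finrank_map_eq]

lemma IsGVCP.finrank_ker_contr3_eq {σ : AlternatingMap ℝ (Euc n) ℝ (Fin 3)} (hσ : IsGVCP σ)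
    {X Y : Euc n} (hX : X ≠ 0) (hY : Y ≠ 0) :
    finrank ℝ (ker (contr3 σ X)) = finrank ℝ (ker (contr3 σ Y)) := by
  obtain ⟨A, -, -, hconj⟩ := hσ
  rw [finrank_ker_contr3_of_conj σ hconj hX, finrank_ker_contr3_of_conj σ hconj hY]

lemma IsGVCP.inner_contr3_eq_zero_of_mem_ker {σ : AlternatingMap ℝ (Euc n) ℝ (Fin 3)}
    (hσ : IsGVCP σ) {X : Euc n} (hX : X ≠ 0) (Z : Euc n) {w w' : Euc n}
    (hw : w ∈ ker (contr3 σ X)) (hw' : w' ∈ ker (contr3 σ X)) :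
    ⟪contr3 σ Z w, w'⟫ = 0 := by
  refine inner_apply_eq_zero_of_eventually_finrank_ker_add_smul_eq (contr3_skew σ X) ?_ hw hw'
  have hne : ∀ᶠ x in 𝓝[>] (0 : ℝ), X + x • Z ≠ 0 := by
    have hcont : Continuous fun x : ℝ => X + x • Z := by fun_prop
    exact ((hcont.tendsto 0).eventually_ne (by simpa using hX)).filter_mono nhdsWithin_le_nhds
  filter_upwards [hne] with x hx
  rw [← contr3_smul, ← contr3_add, hσ.finrank_ker_contr3_eq hx hX]

end Contraction

theorem statement7_general {k : ℕ} (σ : AlternatingMap ℝ (Euc (4 * k)) ℝ (Fin 3))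
    (hσ : IsGVCP σ) (X : Euc (4 * k)) (hX : X ≠ 0) (U : Euc (4 * k)) (hU : U ≠ 0)
    (hUker : U ∈ LinearMap.ker (contr3 σ X)) :
    LinearMap.ker (contr3 σ U) = LinearMap.ker (contr3 σ X) := by
  have hle : ker (contr3 σ X) ≤ ker (contr3 σ U) := fun w hw =>
    ext_inner_right ℝ fun Z => by
      rw [inner_contr3, σ.map_vecCons_rotate Z, ← inner_contr3,
        hσ.inner_contr3_eq_zero_of_mem_ker hX Z hUker hw, inner_zero_left]
  exact (Submodule.eq_of_le_of_finrank_eq hle (hσ.finrank_ker_contr3_eq hX hU)).symm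

/-- Let `n = 4k` with `k ≥ 1` and let `σ` be a generalized vector cross product
on `ℝⁿ`. Then for every nonzero vector `X ∈ ℝⁿ` and every nonzero vector `U ∈ ker(σ_X)`, one has
`ker(σ_U) = ker(σ_X)`. -/
theorem statement7 {k : ℕ} (hk : 1 ≤ k) (σ : AlternatingMap ℝ (Euc (4 * k)) ℝ (Fin 3))
    (hσ : IsGVCP σ) (X : Euc (4 * k)) (hX : X ≠ 0) (U : Euc (4 * k)) (hU : U ≠ 0)
    (hUker : U ∈ LinearMap.ker (contr3 σ X)) :
    LinearMap.ker (contr3 σ U) = LinearMap.ker (contr3 σ X) :=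
  statement7_general σ hσ X hX U hU hUker
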